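/- Local quasi-uniformity of the generalized Shishkin mesh in the coarse region: let N ≥ 8 be divisible by 4, σ ∈ (0,1/4], p = 32 − 128σ, and suppose 4σN² ≥ 15p. Then for every i with N/4 ≤ i ≤ N/2 − 1, the mesh widths satisfy 2h_i − h_{i+1} ≥ 0. -/
import Mathlib


/-- Generating function of the generalized Shishkin mesh with transition
parameter `σ` (and `p = 32 - 128σ`, so that `K(1/2) = 1/2`). -/
noncomputable def genK (σ t : ℝ) : ℝ :=
  if t ≤ 1/4 then 4*σ*t
  else (32 - 128*σ)*(t - 1/4)^3 + 4*σ*(t - 1/4) + σ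

/-- Mesh points `x_j = K(j/N)` (for `j ≤ N/2`). -/
noncomputable def meshX (σ : ℝ) (N j : ℕ) : ℝ := genK σ ((j:ℝ)/(N:ℝ))

/-- Mesh widths `h_j = x_j − x_{j−1}`. -/
noncomputable def meshH (σ : ℝ) (N j : ℕ) : ℝ := meshX σ N j - meshX σ N (j-1)

set_option maxHeartbeats 1000000 in
/-- Local quasi-uniformity of the generalized Shishkin mesh in the coarse
region: if `4σN² ≥ 15p` (with `p = 32 − 128σ`), then `2h_i − h_{i+1} ≥ 0`
for `N/4 ≤ i ≤ N/2 − 1`. -/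
theorem stmt_12
    (N : ℕ) (hN4 : 4 ∣ N) (hN : 8 ≤ N)
    (σ : ℝ) (hσ : σ ∈ Set.Ioc (0:ℝ) (1/4))
    (hcond : 15 * (32 - 128*σ) ≤ 4 * σ * (N:ℝ)^2) :
    ∀ i : ℕ, N/4 ≤ i → i ≤ N/2 - 1 →
      0 ≤ 2 * meshH σ N i - meshH σ N (i+1) := by
  obtain ⟨m, rfl⟩ := hN4
  have hm : 2 ≤ m := by omega
  obtain ⟨hσ0, hσ4⟩ := hσ
  have hM : (2:ℝ) ≤ (m:ℝ) := by exact_mod_cast hm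
  have hM0 : (0:ℝ) < (m:ℝ) := by linarith
  have hm0 : (m:ℝ) ≠ 0 := ne_of_gt hM0
  have hp : (0:ℝ) ≤ 32 - 128*σ := by linarith
  have hcond' : 15 * (32 - 128*σ) ≤ 64 * σ * (m:ℝ)^2 := by
    have h4 : ((4*m:ℕ):ℝ) = 4*(m:ℝ) := by push_cast; ring
    rw [h4] at hcond; nlinarith [hcond]
  have hlin : ∀ j : ℕ, j ≤ m → meshX σ (4*m) j = 4*σ*((j:ℝ)/(4*(m:ℝ))) := by
    intro j hj
    have hj' : (j:ℝ) ≤ (m:ℝ) := by exact_mod_cast hj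
    rw [meshX, genK, if_pos]
    · push_cast; ring_nf
    · push_cast
      rw [div_le_iff₀ (by linarith)]
      linarith
  have hcub : ∀ j : ℕ, m < j → meshX σ (4*m) j
      = (32-128*σ)*(((j:ℝ) - (m:ℝ))/(4*(m:ℝ)))^3 + 4*σ*((j:ℝ)/(4*(m:ℝ))) := by
    intro j hj
    have hj' : (m:ℝ) < (j:ℝ) := by exact_mod_cast hj
    rw [meshX, genK, if_neg]
    · push_cast
      field_simp
      ring
    · push_cast
      rw [not_le, lt_div_iff₀ (by linarith)]
      linarith
  intro i hi1 hi2
  obtain ⟨k, rfl⟩ := Nat.exists_eq_add_of_le (show m ≤ i by omega)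
  have hk : k + 1 ≤ m := by omega
  rw [meshH, meshH]
  match k with
  | 0 =>
    have e0 : m + 0 = m := by omega
    rw [e0, show m + 1 - 1 = m from by omega]
    rw [hlin m le_rfl, hlin (m-1) (by omega), hcub (m+1) (by omega)]
    have hc1 : ((m-1:ℕ):ℝ) = (m:ℝ) - 1 := by
      have := Nat.cast_sub (show 1 ≤ m by omega) (R := ℝ); simpa using this
    rw [hc1]
    push_cast
    have key : 2 * (4*σ*((m:ℝ)/(4*(m:ℝ))) - 4*σ*(((m:ℝ)-1)/(4*(m:ℝ)))) -
        ((32-128*σ)*((((m:ℝ)+1) - (m:ℝ))/(4*(m:ℝ)))^3 + 4*σ*(((m:ℝ)+1)/(4*(m:ℝ)))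
          - 4*σ*((m:ℝ)/(4*(m:ℝ))))
        = (64*σ*(m:ℝ)^2 - (32-128*σ)) / (64*(m:ℝ)^3) := by
      field_simp
      ring
    rw [key]
    apply div_nonneg _ (by positivity)
    nlinarith [hcond', hp]
  | 1 =>
    have e0 : m + 1 - 1 = m := by omega
    have e1 : m + 1 + 1 = m + 2 := by omega
    have e2 : m + 1 + 1 - 1 = m + 1 := by omega
    rw [e0, e1, e2]
    rw [hlin m le_rfl, hcub (m+1) (by omega), hcub (m+2) (by omega)]
    push_cast
    have key : 2 * ((32-128*σ)*((((m:ℝ)+1) - (m:ℝ))/(4*(m:ℝ)))^3 + 4*σ*(((m:ℝ)+1)/(4*(m:ℝ)))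
          - 4*σ*((m:ℝ)/(4*(m:ℝ)))) -
        ((32-128*σ)*((((m:ℝ)+2) - (m:ℝ))/(4*(m:ℝ)))^3 + 4*σ*(((m:ℝ)+2)/(4*(m:ℝ)))
          - ((32-128*σ)*((((m:ℝ)+1) - (m:ℝ))/(4*(m:ℝ)))^3 + 4*σ*(((m:ℝ)+1)/(4*(m:ℝ)))))
        = (64*σ*(m:ℝ)^2 - 5*(32-128*σ)) / (64*(m:ℝ)^3) := by
      field_simp
      ring
    rw [key]
    apply div_nonneg _ (by positivity)
    nlinarith [hcond', hp]
  | (K+2) =>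
    have e0 : m + (K+2) - 1 = m + (K+1) := by omega
    have e1 : m + (K+2) + 1 = m + (K+3) := by omega
    rw [e0, e1, show m + (K+3) - 1 = m + (K+2) from by omega]
    rw [hcub (m+(K+1)) (by omega), hcub (m+(K+2)) (by omega), hcub (m+(K+3)) (by omega)]
    have hK0 : (0:ℝ) ≤ (K:ℝ) := Nat.cast_nonneg K
    push_cast
    generalize hgen : (K:ℝ) = x at hK0 ⊢
    have key : 2 * ((32-128*σ)*((((m:ℝ)+(x+2)) - (m:ℝ))/(4*(m:ℝ)))^3 + 4*σ*(((m:ℝ)+(x+2))/(4*(m:ℝ)))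
          - ((32-128*σ)*((((m:ℝ)+(x+1)) - (m:ℝ))/(4*(m:ℝ)))^3 + 4*σ*(((m:ℝ)+(x+1))/(4*(m:ℝ))))) -
        ((32-128*σ)*((((m:ℝ)+(x+3)) - (m:ℝ))/(4*(m:ℝ)))^3 + 4*σ*(((m:ℝ)+(x+3))/(4*(m:ℝ)))
          - ((32-128*σ)*((((m:ℝ)+(x+2)) - (m:ℝ))/(4*(m:ℝ)))^3 + 4*σ*(((m:ℝ)+(x+2))/(4*(m:ℝ)))))
        = (64*σ*(m:ℝ)^2 + (32-128*σ)*(3*x^2+3*x-5)) / (64*(m:ℝ)^3) := by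
      field_simp
      ring
    have hpos : 0 ≤ (64*σ*(m:ℝ)^2 + (32-128*σ)*(3*x^2+3*x-5)) / (64*(m:ℝ)^3) := by
      apply div_nonneg _ (by positivity)
      nlinarith [hcond', hp, mul_nonneg hp (mul_nonneg hK0 hK0), mul_nonneg hp hK0]
    linarith [key, hpos]
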